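/- arXiv:1212.3467 — 4 statements merged into one kernel-verified Lean document; each statement's English description precedes it below -/
import Mathlib

section
/- Let w ≤ v be positive integers, n = w + v, and let i ≠ j be positive integers with i, j ≤ w. Define V_i as the set of vectors in F_2^n having exactly i ones on the first w coordinates and exactly i ones on the last v coordinates, and m_{i,j} = max{d(X,Y) : X in V_i, Y in V_j}. If i + j ≥ v, then m_{i,j} = 2(n - i - j). -/
/-!
Over `F_2`, the Hamming distance of `X` and `Y` is the size of the symmetric difference of
their supports, and `|S ∆ T| + |S| + |T| = 2 |S ∪ T|`. A vector of `V_i` has support of size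
`2i`, so `d(X, Y) = 2 |S ∪ T| - 2i - 2j ≤ 2(n - i - j)`, with equality exactly when the
supports cover all coordinates. Putting the ones of `X` at the start of each block and those
of `Y` at the end achieves this precisely because `i + j ≥ v ≥ w`.
-/

open Finset

/-- The set of vectors in `F_2^(w+v)` having exactly `i` ones on the first `w`
coordinates and exactly `i` ones on the last `v` coordinates. -/
def Vset (w v i : ℕ) : Set (Fin (w + v) → ZMod 2) :=
  {X | (Finset.univ.filter fun k => X k ≠ 0 ∧ (k : ℕ) < w).card = i ∧
       (Finset.univ.filter fun k => X k ≠ 0 ∧ w ≤ (k : ℕ)).card = i}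

open scoped symmDiff

theorem Finset.card_symmDiff_add_card_add_card {α : Type*} [DecidableEq α] (s t : Finset α) :
    #(s ∆ t) + #s + #t = 2 * #(s ∪ t) := by
  rw [symmDiff_eq_sup_sdiff_inf, sup_eq_union, inf_eq_inter,
    card_sdiff_of_subset inter_subset_union, add_assoc, ← card_union_add_card_inter]
  have := card_le_card (inter_subset_union (s := s) (t := t))
  omega

theorem hammingDist_eq_card_symmDiff {ι : Type*} [Fintype ι] [DecidableEq ι] (X Y : ι → ZMod 2) :
    hammingDist X Y = #(univ.filter (X · ≠ 0) ∆ univ.filter (Y · ≠ 0)) := by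
  have hne : ∀ a b : ZMod 2, a ≠ b ↔ (a ≠ 0 ∧ ¬b ≠ 0 ∨ b ≠ 0 ∧ ¬a ≠ 0) := by decide
  unfold hammingDist
  congr 1
  ext k
  simp only [mem_filter, mem_univ, true_and, mem_symmDiff]
  exact hne (X k) (Y k)

theorem Fin.card_filter_le_and_lt {n a b : ℕ} (hb : b ≤ n) :
    #{k : Fin n | a ≤ (k : ℕ) ∧ (k : ℕ) < b} = b - a := by
  rw [← Nat.card_Ico a b, ← card_map Fin.valEmbedding]
  congr 1
  ext m
  simp only [mem_map, mem_filter, mem_univ, true_and, Fin.valEmbedding_apply, mem_Ico]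
  exact ⟨by rintro ⟨k, hk, rfl⟩; exact hk, fun hm => ⟨⟨m, by omega⟩, hm, rfl⟩⟩

section Vset

variable {w v i j : ℕ}

theorem card_support_of_mem_Vset {X : Fin (w + v) → ZMod 2} (hX : X ∈ Vset w v i) :
    #(univ.filter (X · ≠ 0)) = 2 * i := by
  rw [← card_filter_add_card_filter_not (p := fun k : Fin (w + v) => (k : ℕ) < w),
    filter_filter, filter_filter]
  simp only [Nat.not_lt]
  rw [hX.1, hX.2]
  omega

theorem hammingDist_add_eq_of_mem_Vset {X Y : Fin (w + v) → ZMod 2}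
    (hX : X ∈ Vset w v i) (hY : Y ∈ Vset w v j) :
    hammingDist X Y + 2 * i + 2 * j = 2 * #(univ.filter (X · ≠ 0) ∪ univ.filter (Y · ≠ 0)) := by
  rw [hammingDist_eq_card_symmDiff, ← card_support_of_mem_Vset hX,
    ← card_support_of_mem_Vset hY, card_symmDiff_add_card_add_card]

def blockIndicator (w v a b i : ℕ) : Fin (w + v) → ZMod 2 := fun k =>
  if (a ≤ (k : ℕ) ∧ (k : ℕ) < a + i) ∨ (w + b ≤ (k : ℕ) ∧ (k : ℕ) < w + b + i) then 1 else 0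

theorem blockIndicator_ne_zero_iff {a b : ℕ} (k : Fin (w + v)) :
    blockIndicator w v a b i k ≠ 0 ↔
      (a ≤ (k : ℕ) ∧ (k : ℕ) < a + i) ∨ (w + b ≤ (k : ℕ) ∧ (k : ℕ) < w + b + i) := by
  unfold blockIndicator
  split_ifs with h <;> simp [h]

theorem blockIndicator_mem_Vset {a b : ℕ} (ha : a + i ≤ w) (hb : b + i ≤ v) :
    blockIndicator w v a b i ∈ Vset w v i := by
  constructor
  · rw [filter_congr (q := fun k : Fin (w + v) => a ≤ (k : ℕ) ∧ (k : ℕ) < a + i)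
      fun k _ => by rw [blockIndicator_ne_zero_iff]; omega]
    rw [Fin.card_filter_le_and_lt (by omega)]
    omega
  · rw [filter_congr (q := fun k : Fin (w + v) => w + b ≤ (k : ℕ) ∧ (k : ℕ) < w + b + i)
      fun k _ => by rw [blockIndicator_ne_zero_iff]; omega]
    rw [Fin.card_filter_le_and_lt (by omega)]
    omega

end Vset

theorem stmt_6_general (w v i j : ℕ) (hwv : w ≤ v)
    (hiw : i ≤ w) (hjw : j ≤ w) (hsum : v ≤ i + j) :
    IsGreatest {m | ∃ X ∈ Vset w v i, ∃ Y ∈ Vset w v j, hammingDist X Y = m}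
      (2 * ((w + v) - i - j)) := by
  constructor
  · have hX : blockIndicator w v 0 0 i ∈ Vset w v i := blockIndicator_mem_Vset (by omega) (by omega)
    have hY : blockIndicator w v (w - j) (v - j) j ∈ Vset w v j :=
      blockIndicator_mem_Vset (by omega) (by omega)
    have hcover : univ.filter (blockIndicator w v 0 0 i · ≠ 0) ∪
        univ.filter (blockIndicator w v (w - j) (v - j) j · ≠ 0) = univ := by
      ext k
      simp only [mem_union, mem_filter, mem_univ, true_and, blockIndicator_ne_zero_iff, iff_true]
      omega
    have hdist := hammingDist_add_eq_of_mem_Vset hX hY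
    rw [hcover, card_univ, Fintype.card_fin] at hdist
    exact ⟨_, hX, _, hY, by omega⟩
  · rintro _ ⟨X, hX, Y, hY, rfl⟩
    have hdist := hammingDist_add_eq_of_mem_Vset hX hY
    have hunion := card_le_univ (univ.filter (X · ≠ 0) ∪ univ.filter (Y · ≠ 0))
    rw [Fintype.card_fin] at hunion
    omega

theorem stmt_6 (w v i j : ℕ) (hw : 0 < w) (hwv : w ≤ v)
    (hi : 0 < i) (hj : 0 < j) (hiw : i ≤ w) (hjw : j ≤ w)
    (hij : i ≠ j) (hsum : v ≤ i + j) :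
    IsGreatest {m | ∃ X ∈ Vset w v i, ∃ Y ∈ Vset w v j, hammingDist X Y = m}
      (2 * ((w + v) - i - j)) :=
  stmt_6_general w v i j hwv hiw hjw hsum
end

section
/- Let w, v be positive integers with n = w + v, and let i ≠ j be positive integers with i, j ≤ w. With V_i the set of vectors in F_2^n having exactly i ones on the first w coordinates and exactly i ones on the last v coordinates, the maximum Hamming distance m_{i,j} between a vector in V_i and a vector in V_j equals a + b, where a = i + j if i + j < w and a = i + j - 2(i+j-w) otherwise, and b = i + j if i + j < v and b = i + j - 2(i+j-v) otherwise. -/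
/-!
Over `F_2` a coordinate contributes to `d(X, Y)` exactly when one of `X, Y` is nonzero there, so on
a block of size `s` where `X` has `i` ones and `Y` has `j`, the distance is `i + j - 2 t` with `t`
the size of the overlap of the supports, and `t ≥ i + j - s`. Putting the ones of `X` at the start
of each block and those of `Y` at the end makes the overlap exactly `max 0 (i + j - s)`.
-/

open Finset

section Blocks

variable {m n : ℕ} {β : Type*} [DecidableEq β]

theorem hammingDist_eq_castAdd_add_natAdd (x y : Fin (m + n) → β) :
    hammingDist x y = hammingDist (x ∘ Fin.castAdd n) (y ∘ Fin.castAdd n) +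
      hammingDist (x ∘ Fin.natAdd m) (y ∘ Fin.natAdd m) := by
  simp only [hammingDist, card_filter, Fin.sum_univ_add, Function.comp_apply]

variable [Zero β]

theorem card_filter_ne_zero_lt_eq_hammingNorm_castAdd (x : Fin (m + n) → β) :
    #{k | x k ≠ 0 ∧ (k : ℕ) < m} = hammingNorm (x ∘ Fin.castAdd n) := by
  simp [hammingNorm, card_filter, Fin.sum_univ_add, -sum_boole]

theorem card_filter_ne_zero_le_eq_hammingNorm_natAdd (x : Fin (m + n) → β) :
    #{k | x k ≠ 0 ∧ m ≤ (k : ℕ)} = hammingNorm (x ∘ Fin.natAdd m) := by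
  simp [hammingNorm, card_filter, Fin.sum_univ_add, -sum_boole]

end Blocks

theorem mem_Vset_iff {w v i : ℕ} {X : Fin (w + v) → ZMod 2} :
    X ∈ Vset w v i ↔
      hammingNorm (X ∘ Fin.castAdd v) = i ∧ hammingNorm (X ∘ Fin.natAdd w) = i := by
  rw [Vset, Set.mem_ofPred_eq, card_filter_ne_zero_lt_eq_hammingNorm_castAdd,
    card_filter_ne_zero_le_eq_hammingNorm_natAdd]

section ZModTwo

variable {ι : Type*} [Fintype ι]

theorem hammingDist_add_two_mul_card_filter_and (x y : ι → ZMod 2) :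
    hammingDist x y + 2 * #{k | x k ≠ 0 ∧ y k ≠ 0} = hammingNorm x + hammingNorm y := by
  have pointwise : ∀ a b : ZMod 2,
      (if a ≠ b then 1 else 0) + 2 * (if a ≠ 0 ∧ b ≠ 0 then 1 else 0) =
        (if a ≠ 0 then 1 else 0) + (if b ≠ 0 then 1 else 0) := by decide
  simp only [hammingDist, hammingNorm, card_filter, mul_sum, ← sum_add_distrib]
  exact sum_congr rfl fun k _ => pointwise (x k) (y k)

theorem hammingDist_le_of_hammingNorm_eq {x y : ι → ZMod 2} {i j : ℕ}
    (hx : hammingNorm x = i) (hy : hammingNorm y = j) :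
    hammingDist x y ≤ i + j - 2 * (i + j - Fintype.card ι) := by
  classical
  have key := hammingDist_add_two_mul_card_filter_and x y
  rw [hx, hy] at key
  set A : Finset ι := {k | x k ≠ 0}
  set B : Finset ι := {k | y k ≠ 0}
  have overlap : #(A ∪ B) + #{k | x k ≠ 0 ∧ y k ≠ 0} = i + j := by
    rw [filter_and, card_union_add_card_inter, ← hx, ← hy]; rfl
  have := card_le_univ (A ∪ B)
  omega

end ZModTwo

theorem Fin.card_filter_univ_eq_card_filter_range {s : ℕ} (p : ℕ → Prop) [DecidablePred p] :
    #{k : Fin s | p k} = #{k ∈ range s | p k} := by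
  rw [← card_map Fin.valEmbedding, map_filter']
  congr 1
  ext b
  simp +contextual [Fin.exists_iff]

section Indicators

variable {s i j : ℕ}

def headOnes (s i : ℕ) : Fin s → ZMod 2 := fun k => if (k : ℕ) < i then 1 else 0

def tailOnes (s j : ℕ) : Fin s → ZMod 2 := fun k => if s ≤ k + j then 1 else 0

theorem hammingNorm_headOnes (hi : i ≤ s) : hammingNorm (headOnes s i) = i := by
  simp [hammingNorm, headOnes, Fin.card_filter_val_lt, hi]

theorem hammingNorm_tailOnes (hj : j ≤ s) : hammingNorm (tailOnes s j) = j := by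
  have : {k ∈ range s | s ≤ k + j} = Ico (s - j) s := by ext; simp; omega
  simp only [hammingNorm, tailOnes, ne_eq, ite_eq_right_iff, one_ne_zero, imp_false, not_not]
  rw [Fin.card_filter_univ_eq_card_filter_range (s ≤ · + j), this, Nat.card_Ico]
  omega

theorem hammingDist_headOnes_tailOnes (hi : i ≤ s) (hj : j ≤ s) :
    hammingDist (headOnes s i) (tailOnes s j) = i + j - 2 * (i + j - s) := by
  have key := hammingDist_add_two_mul_card_filter_and (headOnes s i) (tailOnes s j)
  have overlap : {k ∈ range s | k < i ∧ s ≤ k + j} = Ico (s - j) i := by ext; simp; omega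
  simp only [hammingNorm_headOnes hi, hammingNorm_tailOnes hj, headOnes, tailOnes, ne_eq,
    ite_eq_right_iff, one_ne_zero, imp_false, not_not] at key
  rw [Fin.card_filter_univ_eq_card_filter_range (fun k => k < i ∧ s ≤ k + j), overlap,
    Nat.card_Ico] at key
  omega

end Indicators

theorem stmt_7_general (w v i j : ℕ) (hwv : w ≤ v)
    (hiw : i ≤ w) (hjw : j ≤ w) :
    IsGreatest {m | ∃ X ∈ Vset w v i, ∃ Y ∈ Vset w v j, hammingDist X Y = m}
      ((if i + j < w then i + j else i + j - 2 * (i + j - w)) +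
       (if i + j < v then i + j else i + j - 2 * (i + j - v))) := by
  -- truncated subtraction: `i + j - s = 0` when `i + j < s`
  have block_max (s : ℕ) : (if i + j < s then i + j else i + j - 2 * (i + j - s)) =
      i + j - 2 * (i + j - s) := by
    split_ifs <;> omega
  rw [block_max, block_max]
  constructor
  · refine ⟨Fin.append (headOnes w i) (headOnes v i), ?_,
      Fin.append (tailOnes w j) (tailOnes v j), ?_, ?_⟩
    · simp [mem_Vset_iff, Function.comp_def, hammingNorm_headOnes, hiw, hiw.trans hwv]
    · simp [mem_Vset_iff, Function.comp_def, hammingNorm_tailOnes, hjw, hjw.trans hwv]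
    · simp [hammingDist_eq_castAdd_add_natAdd, Function.comp_def, hammingDist_headOnes_tailOnes,
        hiw, hjw, hiw.trans hwv, hjw.trans hwv]
  · rintro _ ⟨X, hX, Y, hY, rfl⟩
    rw [mem_Vset_iff] at hX hY
    rw [hammingDist_eq_castAdd_add_natAdd]
    have left := hammingDist_le_of_hammingNorm_eq hX.1 hY.1
    have right := hammingDist_le_of_hammingNorm_eq hX.2 hY.2
    rw [Fintype.card_fin] at left right
    exact add_le_add left right

theorem stmt_7 (w v i j : ℕ) (hw : 0 < w) (hv : 0 < v) (hwv : w ≤ v)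
    (hi : 0 < i) (hj : 0 < j) (hiw : i ≤ w) (hjw : j ≤ w) (hij : i ≠ j) :
    IsGreatest {m | ∃ X ∈ Vset w v i, ∃ Y ∈ Vset w v j, hammingDist X Y = m}
      ((if i + j < w then i + j else i + j - 2 * (i + j - w)) +
       (if i + j < v then i + j else i + j - 2 * (i + j - v))) :=
  stmt_7_general w v i j hwv hiw hjw
end

section
/- Let C be an (n,d,w) constant-weight code (all codewords have weight w, pairwise distances ≥ d) with d even, and suppose i ≠ j are in {d/2,...,w} with m_{i,j} < d, where m_{i,j} is the maximum distance between a vector with exactly i ones in the first w coordinates and i ones in the last n-w coordinates and a vector with exactly j ones in the first w coordinates and j ones in the last n-w coordinates. If X in C has its support equal to the first w coordinates, then it is not possible that C contains both a codeword at distance 2i from X and a codeword at distance 2j from X. -/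
/-!
Translating by `X` preserves distances, and when `X` and `Y` have the same weight, `X + Y` has as
many ones on the support of `X` (where `Y` vanishes) as off it (where `Y` does not), so a codeword
at distance `2i` from `X` is sent into `V_i`. Two codewords at distances `2i ≠ 2j` from `X` are
distinct, yet their translates lie in `V_i` and `V_j`, hence at distance at most `m_{i,j} < d`.
-/

open Finset

namespace ZMod

lemma two_add_ne_zero_iff (x y : ZMod 2) : x + y ≠ 0 ↔ x ≠ y := by
  rw [Ne, add_eq_zero_iff_eq_neg, neg_eq_self_mod_two]

end ZMod

section BinaryVectors

variable {ι : Type*} [Fintype ι]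

lemma hammingDist_add_left {β : Type*} [Add β] [IsLeftCancelAdd β] [DecidableEq β]
    (X Y Z : ι → β) :
    hammingDist (X + Y) (X + Z) = hammingDist Y Z :=
  hammingDist_comp (fun k => (X k + ·)) fun k => add_right_injective (X k)

lemma hammingDist_eq_card_add_ne_zero (X Y : ι → ZMod 2) :
    hammingDist X Y = #{k | (X + Y) k ≠ 0} := by
  simp only [hammingDist, Pi.add_apply, ZMod.two_add_ne_zero_iff]

lemma card_add_ne_zero_and_ne_zero_eq [DecidableEq ι] (X Y : ι → ZMod 2)
    (hXY : hammingNorm X = hammingNorm Y) :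
    #{k | (X + Y) k ≠ 0 ∧ X k ≠ 0} = #{k | (X + Y) k ≠ 0 ∧ X k = 0} := by
  have hon : univ.filter (fun k => (X + Y) k ≠ 0 ∧ X k ≠ 0) =
      univ.filter (fun k => X k ≠ 0) \ univ.filter (fun k => Y k ≠ 0) := by
    ext k
    simp only [mem_filter, mem_sdiff, mem_univ, true_and, Pi.add_apply,
      ZMod.two_add_ne_zero_iff]
    generalize X k = a, Y k = b
    revert a b
    decide
  have hoff : univ.filter (fun k => (X + Y) k ≠ 0 ∧ X k = 0) =
      univ.filter (fun k => Y k ≠ 0) \ univ.filter (fun k => X k ≠ 0) := by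
    ext k
    simp only [mem_filter, mem_sdiff, mem_univ, true_and, Pi.add_apply,
      ZMod.two_add_ne_zero_iff]
    generalize X k = a, Y k = b
    revert a b
    decide
  rw [hon, hoff]
  exact card_sdiff_comm hXY

lemma two_mul_card_add_ne_zero_and_ne_zero [DecidableEq ι] (X Y : ι → ZMod 2)
    (hXY : hammingNorm X = hammingNorm Y) :
    2 * #{k | (X + Y) k ≠ 0 ∧ X k ≠ 0} = hammingDist X Y ∧
      2 * #{k | (X + Y) k ≠ 0 ∧ X k = 0} = hammingDist X Y := by
  have hsplit :=
    card_filter_add_card_filter_not (s := {k | (X + Y) k ≠ 0}) (p := fun k => X k ≠ 0)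
  simp only [filter_filter, not_not] at hsplit
  rw [hammingDist_eq_card_add_ne_zero]
  have := card_add_ne_zero_and_ne_zero_eq X Y hXY
  omega

end BinaryVectors

theorem stmt_8_general (n d w i j : ℕ)
    (C : Finset (Fin n → ZMod 2))
    (hweight : ∀ X ∈ C, hammingNorm X = w)
    (hmin : ∀ X ∈ C, ∀ Y ∈ C, X ≠ Y → d ≤ hammingDist X Y)
    (hij : i ≠ j)
    (hm : ∀ Y Z : Fin n → ZMod 2,
      (Finset.univ.filter fun k => Y k ≠ 0 ∧ (k : ℕ) < w).card = i →
      (Finset.univ.filter fun k => Y k ≠ 0 ∧ w ≤ (k : ℕ)).card = i →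
      (Finset.univ.filter fun k => Z k ≠ 0 ∧ (k : ℕ) < w).card = j →
      (Finset.univ.filter fun k => Z k ≠ 0 ∧ w ≤ (k : ℕ)).card = j →
      hammingDist Y Z < d)
    (X : Fin n → ZMod 2) (hX : X ∈ C)
    (hsupp : ∀ k : Fin n, X k ≠ 0 ↔ (k : ℕ) < w) :
    ¬ ((∃ Y ∈ C, hammingDist X Y = 2 * i) ∧ (∃ Z ∈ C, hammingDist X Z = 2 * j)) := by
  rintro ⟨⟨Y, hY, hXY⟩, ⟨Z, hZ, hXZ⟩⟩
  have hYZ : Y ≠ Z := by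
    rintro rfl
    omega
  have hblocks (V : Fin n → ZMod 2) (hV : V ∈ C) :
      2 * #{k | (X + V) k ≠ 0 ∧ (k : ℕ) < w} = hammingDist X V ∧
        2 * #{k | (X + V) k ≠ 0 ∧ w ≤ (k : ℕ)} = hammingDist X V := by
    simpa only [← not_lt, ← hsupp, not_not] using
      two_mul_card_add_ne_zero_and_ne_zero X V ((hweight X hX).trans (hweight V hV).symm)
  obtain ⟨hY₁, hY₂⟩ := hblocks Y hY
  obtain ⟨hZ₁, hZ₂⟩ := hblocks Z hZ
  have hclose := hm (X + Y) (X + Z) (by omega) (by omega) (by omega) (by omega)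
  rw [hammingDist_add_left] at hclose
  exact (hmin Y hY Z hZ hYZ).not_gt hclose

theorem stmt_8 (n d w i j : ℕ) (hwn : w ≤ n) (hd : Even d)
    (C : Finset (Fin n → ZMod 2))
    (hweight : ∀ X ∈ C, hammingNorm X = w)
    (hmin : ∀ X ∈ C, ∀ Y ∈ C, X ≠ Y → d ≤ hammingDist X Y)
    (hi : d / 2 ≤ i) (hiw : i ≤ w) (hj : d / 2 ≤ j) (hjw : j ≤ w) (hij : i ≠ j)
    (hm : ∀ Y Z : Fin n → ZMod 2,
      (Finset.univ.filter fun k => Y k ≠ 0 ∧ (k : ℕ) < w).card = i →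
      (Finset.univ.filter fun k => Y k ≠ 0 ∧ w ≤ (k : ℕ)).card = i →
      (Finset.univ.filter fun k => Z k ≠ 0 ∧ (k : ℕ) < w).card = j →
      (Finset.univ.filter fun k => Z k ≠ 0 ∧ w ≤ (k : ℕ)).card = j →
      hammingDist Y Z < d)
    (X : Fin n → ZMod 2) (hX : X ∈ C)
    (hsupp : ∀ k : Fin n, X k ≠ 0 ↔ (k : ℕ) < w) :
    ¬ ((∃ Y ∈ C, hammingDist X Y = 2 * i) ∧ (∃ Z ∈ C, hammingDist X Z = 2 * j)) :=
  stmt_8_general n d w i j C hweight hmin hij hm X hX hsupp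
end

section
/- Let T({(w_i,n_i)}_{i=1}^t, d) denote the maximum size of a binary code of length n_1 + ... + n_t and minimum distance ≥ d such that every codeword has exactly w_i ones on the i-th block of n_i coordinates. If w_1 > 0, then T({(w_i,n_i)}_{i=1}^t, d) ≤ floor( (n_1 / w_1) · T({(w_1 - 1, n_1 - 1)} ∪ {(w_i,n_i)}_{i=2}^t, d) ). -/
/-!
Count the pairs (codeword, position of block 0 carrying a 1) in two ways. Each codeword lies in
`w₀` of them. The codewords with a 1 at a fixed position `p` agree there, so deleting `p` keeps
them distinct and at distance `≥ d`, and gives a code with `w₀ - 1` ones on a block 0 of size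
`n₀ - 1`; hence there are at most `T'` of them, `T'` being the maximum on the right-hand side.
Thus `|C| w₀ ≤ n₀ T'`.
-/

/-- `T t nb wb d` is the maximum size of a multiply constant-weight code: a
binary code on coordinate set `Σ i : Fin t, Fin (nb i)` (blocks of sizes
`nb 0, …, nb (t-1)`) with minimum Hamming distance at least `d` such that every
codeword has exactly `wb i` ones on block `i`. -/
noncomputable def T (t : ℕ) (nb wb : Fin t → ℕ) (d : ℕ) : ℕ :=
  sSup {m | ∃ C : Finset ((Σ i : Fin t, Fin (nb i)) → ZMod 2),
    (∀ X ∈ C, ∀ i : Fin t,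
      (Finset.univ.filter fun p : Σ i : Fin t, Fin (nb i) => p.1 = i ∧ X p ≠ 0).card = wb i) ∧
    (∀ X ∈ C, ∀ Y ∈ C, X ≠ Y → d ≤ hammingDist X Y) ∧
    C.card = m}

open Finset Function

section Reindexing

variable {ι κ : Type*} [Fintype ι] [Fintype κ]

theorem card_filter_comp_equiv (e : κ ≃ ι) (P : ι → Prop) [DecidablePred P] :
    #{q | P (e q)} = #{p | P p} := by
  simp only [card_filter]
  exact e.sum_comp fun p => if P p then 1 else 0

theorem card_filter_subtype_ne [DecidableEq ι] (p : ι) (P : ι → Prop) [DecidablePred P] :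
    #{q : {r // r ≠ p} | P q} = #((univ.filter P).erase p) := by
  rw [← card_map (Embedding.subtype _)]
  congr 1
  ext r
  simp [and_comm]

theorem hammingDist_comp_equiv {α : Type*} [DecidableEq α] (e : κ ≃ ι) (x y : ι → α) :
    hammingDist (x ∘ e) (y ∘ e) = hammingDist x y :=
  card_filter_comp_equiv e fun p => x p ≠ y p

end Reindexing

section BlockWeightCode

variable {ι κ β : Type*} [Fintype ι] [Fintype κ] [DecidableEq β]

def IsBlockWeightCode (b : ι → β) (w : β → ℕ) (d : ℕ) (C : Finset (ι → ZMod 2)) : Prop :=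
  (∀ X ∈ C, ∀ i, #{p | b p = i ∧ X p ≠ 0} = w i) ∧
  ∀ X ∈ C, ∀ Y ∈ C, X ≠ Y → d ≤ hammingDist X Y

variable {b : ι → β} {w : β → ℕ} {d : ℕ} {C : Finset (ι → ZMod 2)}

theorem IsBlockWeightCode.sum_card_filter_ne_zero (hC : IsBlockWeightCode b w d C) (i : β) :
    ∑ p ∈ univ.filter (b · = i), #{X ∈ C | X p ≠ 0} = #C * w i := by
  calc ∑ p ∈ univ.filter (b · = i), #{X ∈ C | X p ≠ 0}
      = ∑ X ∈ C, #{p | b p = i ∧ X p ≠ 0} := by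
        have := sum_card_bipartiteAbove_eq_sum_card_bipartiteBelow (s := univ.filter (b · = i))
          (t := C) (r := fun p (X : ι → ZMod 2) => X p ≠ 0)
        simpa only [bipartiteAbove, bipartiteBelow, filter_filter] using this
    _ = #C * w i := by
        rw [sum_congr rfl fun X hX => hC.1 X hX i, sum_const, smul_eq_mul]

theorem IsBlockWeightCode.map_comp_equiv {b' : κ → β} (hC : IsBlockWeightCode b w d C)
    (e : κ ≃ ι) (he : ∀ q, b (e q) = b' q) :
    IsBlockWeightCode b' w d (C.map ⟨(· ∘ e), e.surjective.injective_comp_right⟩) := by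
  simp only [IsBlockWeightCode, forall_mem_map, Embedding.coeFn_mk]
  refine ⟨fun X hX i => ?_, fun X hX Y hY hXY => ?_⟩
  · simpa only [← he, comp_apply] using
      (card_filter_comp_equiv e fun p => b p = i ∧ X p ≠ 0).trans (hC.1 X hX i)
  · rw [hammingDist_comp_equiv]
    exact hC.2 X hX Y hY fun h => hXY (h ▸ rfl)

end BlockWeightCode

section Shortening

variable {ι β : Type*} [Fintype ι] [DecidableEq ι] [DecidableEq β]

theorem ZMod.two_eq_of_ne_zero {x y : ZMod 2} (hx : x ≠ 0) (hy : y ≠ 0) : x = y :=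
  (Fin.eq_one_of_ne_zero x hx).trans (Fin.eq_one_of_ne_zero y hy).symm

def shortenAt (C : Finset (ι → ZMod 2)) (p : ι) : Finset ({r // r ≠ p} → ZMod 2) :=
  {X ∈ C | X p ≠ 0}.image fun X r => X r

theorem card_shortenAt (C : Finset (ι → ZMod 2)) (p : ι) :
    #(shortenAt C p) = #{X ∈ C | X p ≠ 0} := by
  refine card_image_of_injOn fun X hX Y hY hXY => funext fun r => ?_
  by_cases hr : r = p
  · simp only [coe_filter, Set.mem_ofPred_eq] at hX hY
    exact hr ▸ ZMod.two_eq_of_ne_zero hX.2 hY.2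
  · exact congrFun hXY ⟨r, hr⟩

variable {b : ι → β} {w : β → ℕ} {d : ℕ} {C : Finset (ι → ZMod 2)}

theorem IsBlockWeightCode.shortenAt (hC : IsBlockWeightCode b w d C) (p : ι) :
    IsBlockWeightCode (fun r : {r // r ≠ p} => b r) (update w (b p) (w (b p) - 1)) d
      (shortenAt C p) := by
  simp only [IsBlockWeightCode, _root_.shortenAt, forall_mem_image, mem_filter]
  refine ⟨fun X ⟨hX, hXp⟩ i => ?_, fun X ⟨hX, hXp⟩ Y ⟨hY, hYp⟩ hXY => ?_⟩
  · rw [card_filter_subtype_ne p fun r => b r = i ∧ X r ≠ 0, card_erase_eq_ite, hC.1 X hX i,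
      update_apply]
    by_cases hi : i = b p <;> simp [hi, hXp, eq_comm]
  · have hdist : hammingDist (fun r : {r // r ≠ p} => X r) (fun r => Y r) = hammingDist X Y := by
      rw [hammingDist, card_filter_subtype_ne p fun r => X r ≠ Y r, erase_eq_of_notMem]
      · rfl
      · simpa using ZMod.two_eq_of_ne_zero hXp hYp
    exact hdist ▸ hC.2 X hX Y hY fun h => hXY (h ▸ rfl)

end Shortening

section MaxCodeSize

variable {t : ℕ} {nb wb : Fin t → ℕ} {d : ℕ}

theorem T_eq_sSup : T t nb wb d =
    sSup {m | ∃ C, IsBlockWeightCode (Sigma.fst : (Σ i, Fin (nb i)) → Fin t) wb d C ∧ #C = m} := by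
  simp only [T, IsBlockWeightCode, and_assoc]

theorem IsBlockWeightCode.card_le_T {C : Finset ((Σ i : Fin t, Fin (nb i)) → ZMod 2)}
    (hC : IsBlockWeightCode Sigma.fst wb d C) : #C ≤ T t nb wb d := by
  rw [T_eq_sSup]
  refine le_csSup ⟨Fintype.card ((Σ i : Fin t, Fin (nb i)) → ZMod 2), ?_⟩ ⟨C, hC, rfl⟩
  rintro m ⟨C, -, rfl⟩
  exact card_le_univ C

theorem T_le {m : ℕ}
    (h : ∀ C, IsBlockWeightCode (Sigma.fst : (Σ i, Fin (nb i)) → Fin t) wb d C → #C ≤ m) :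
    T t nb wb d ≤ m := by
  rw [T_eq_sSup]
  exact csSup_le ⟨0, ∅, by simp [IsBlockWeightCode], rfl⟩ fun _ ⟨C, hC, hm⟩ => hm ▸ h C hC

theorem card_sigma_fst_eq (nb : Fin t → ℕ) (c : Fin t) :
    Fintype.card {a : Σ i, Fin (nb i) // a.1 = c} = nb c := by
  rw [Fintype.card_congr (Equiv.sigmaSubtype c), Fintype.card_fin]

theorem card_subtype_ne_fst_eq (p : Σ i : Fin t, Fin (nb i)) (c : Fin t) :
    Fintype.card {r : {r // r ≠ p} // r.1.1 = c} = update nb p.1 (nb p.1 - 1) c := by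
  rw [Fintype.card_subtype, card_filter_subtype_ne p (·.1 = c), card_erase_eq_ite,
    ← Fintype.card_subtype, card_sigma_fst_eq, update_apply]
  by_cases hc : c = p.1 <;> simp [hc, eq_comm]

theorem IsBlockWeightCode.card_le_T_of_subtype_ne {p : Σ i : Fin t, Fin (nb i)}
    {C : Finset ({r // r ≠ p} → ZMod 2)} (hC : IsBlockWeightCode (fun r => r.1.1) wb d C) :
    #C ≤ T t (update nb p.1 (nb p.1 - 1)) wb d := by
  obtain ⟨e, he⟩ : ∃ e : (Σ i, Fin (update nb p.1 (nb p.1 - 1) i)) ≃ {r // r ≠ p},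
      ∀ q, (e q).1.1 = q.1 :=
    ⟨_, Equiv.ofFiberEquiv_map fun c => Fintype.equivOfCardEq
      ((card_sigma_fst_eq _ c).trans (card_subtype_ne_fst_eq p c).symm)⟩
  simpa using (hC.map_comp_equiv e he).card_le_T

end MaxCodeSize

theorem stmt_18 (t : ℕ) (nb wb : Fin (t + 1) → ℕ) (d : ℕ) (hw : 0 < wb 0) :
    T (t + 1) nb wb d ≤
      nb 0 * T (t + 1) (Function.update nb 0 (nb 0 - 1))
        (Function.update wb 0 (wb 0 - 1)) d / wb 0 := by
  refine T_le fun C hC => (Nat.le_div_iff_mul_le hw).2 ?_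
  set T' := T (t + 1) (update nb 0 (nb 0 - 1)) (update wb 0 (wb 0 - 1)) d
  set block : Finset (Σ i, Fin (nb i)) := univ.filter (·.1 = 0)
  have hshort : ∀ p ∈ block, #{X ∈ C | X p ≠ 0} ≤ T' := by
    rintro ⟨i, j⟩ hp
    obtain rfl : i = 0 := (mem_filter.1 hp).2
    rw [← card_shortenAt]
    exact (hC.shortenAt ⟨0, j⟩).card_le_T_of_subtype_ne
  calc #C * wb 0 = ∑ p ∈ block, #{X ∈ C | X p ≠ 0} := (hC.sum_card_filter_ne_zero 0).symm
    _ ≤ ∑ _p ∈ block, T' := sum_le_sum hshort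
    _ = nb 0 * T' := by rw [sum_const, ← Fintype.card_subtype, card_sigma_fst_eq, smul_eq_mul]
end
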